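/- arXiv:2103.04401 — 2 statements merged into one kernel-verified Lean document; each statement's English description precedes it below -/
import Mathlib

section
/- Given Lie algebras g and h over a field k equipped with a matched pair structure (▷, ◁), the matched-pair bracket [(ξ,η),(ξ',η')] := ([ξ,ξ'] + η▷ξ' − η'▷ξ, [η,η'] + η◁ξ' − η'◁ξ) is bilinear, antisymmetric and satisfies the Jacobi identity, hence defines a Lie algebra structure on the product vector space g × h; moreover the inclusions ξ ↦ (ξ,0) and η ↦ (0,η) are injective Lie algebra homomorphisms, so g and h are Lie subalgebras of g ⋈ h. -/
/-- A matched pair structure on Lie algebras `G`, `H` over `k`: a left Lie-algebra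
action `tr` (written `η ▷ ξ`) of `H` on `G`, a right Lie-algebra action `tl`
(written `η ◁ ξ`) of `G` on `H`, and the two compatibility conditions. -/
def IsMatchedPair {k G H : Type*} [Field k] [LieRing G] [LieAlgebra k G]
    [LieRing H] [LieAlgebra k H]
    (tr : H →ₗ[k] G →ₗ[k] G) (tl : H →ₗ[k] G →ₗ[k] H) : Prop :=
  (∀ (η η' : H) (ξ : G), tr ⁅η, η'⁆ ξ = tr η (tr η' ξ) - tr η' (tr η ξ)) ∧
  (∀ (η : H) (ξ ξ' : G), tl η ⁅ξ, ξ'⁆ = tl (tl η ξ) ξ' - tl (tl η ξ') ξ) ∧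
  (∀ (η : H) (ξ ξ' : G),
    tr η ⁅ξ, ξ'⁆ = ⁅tr η ξ, ξ'⁆ + ⁅ξ, tr η ξ'⁆ + tr (tl η ξ) ξ' - tr (tl η ξ') ξ) ∧
  (∀ (η η' : H) (ξ : G),
    tl ⁅η, η'⁆ ξ = ⁅η, tl η' ξ⁆ + ⁅tl η ξ, η'⁆ + tl η (tr η' ξ) - tl η' (tr η ξ))

/-- The matched-pair bracket on the product vector space `G × H`:
`[(ξ,η),(ξ',η')] = ([ξ,ξ'] + η▷ξ' − η'▷ξ, [η,η'] + η◁ξ' − η'◁ξ)`. -/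
def mpBracket {k G H : Type*} [Field k] [LieRing G] [LieAlgebra k G]
    [LieRing H] [LieAlgebra k H]
    (tr : H →ₗ[k] G →ₗ[k] G) (tl : H →ₗ[k] G →ₗ[k] H)
    (x y : G × H) : G × H :=
  (⁅x.1, y.1⁆ + tr x.2 y.1 - tr y.2 x.1, ⁅x.2, y.2⁆ + tl x.2 y.1 - tl y.2 x.1)

/-- the matched-pair bracket is bilinear, antisymmetric, satisfies the
Jacobi identity (hence defines a Lie algebra structure on `G × H`), and the
inclusions `ξ ↦ (ξ,0)`, `η ↦ (0,η)` are injective Lie algebra homomorphisms, so `G`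
and `H` are Lie subalgebras of `G ⋈ H`. -/
theorem matchedPair_bracket_lieAlgebra
    {k G H : Type*} [Field k] [LieRing G] [LieAlgebra k G]
    [LieRing H] [LieAlgebra k H]
    (tr : H →ₗ[k] G →ₗ[k] G) (tl : H →ₗ[k] G →ₗ[k] H)
    (hmp : IsMatchedPair tr tl) :
    (∀ x x' y : G × H,
      mpBracket tr tl (x + x') y = mpBracket tr tl x y + mpBracket tr tl x' y) ∧
    (∀ (c : k) (x y : G × H),
      mpBracket tr tl (c • x) y = c • mpBracket tr tl x y) ∧
    (∀ x y y' : G × H,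
      mpBracket tr tl x (y + y') = mpBracket tr tl x y + mpBracket tr tl x y') ∧
    (∀ (c : k) (x y : G × H),
      mpBracket tr tl x (c • y) = c • mpBracket tr tl x y) ∧
    (∀ x y : G × H, mpBracket tr tl x y = - mpBracket tr tl y x) ∧
    (∀ x y z : G × H,
      mpBracket tr tl x (mpBracket tr tl y z)
        + mpBracket tr tl y (mpBracket tr tl z x)
        + mpBracket tr tl z (mpBracket tr tl x y) = 0) ∧
    (∀ ξ ξ' : G, mpBracket tr tl (ξ, (0 : H)) (ξ', (0 : H)) = (⁅ξ, ξ'⁆, (0 : H))) ∧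
    Function.Injective (fun ξ : G => ((ξ, (0 : H)) : G × H)) ∧
    (∀ η η' : H, mpBracket tr tl ((0 : G), η) ((0 : G), η') = ((0 : G), ⁅η, η'⁆)) ∧
    Function.Injective (fun η : H => (((0 : G), η) : G × H)) := by
  obtain ⟨h1, h2, h3, h4⟩ := hmp
  refine ⟨?_, ?_, ?_, ?_, ?_, ?_, ?_, ?_, ?_, ?_⟩
  · intro x x' y
    simp only [mpBracket, Prod.fst_add, Prod.snd_add, add_lie, map_add,
      LinearMap.add_apply, Prod.mk_add_mk, Prod.mk.injEq]
    constructor <;> abel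
  · intro c x y
    simp only [mpBracket, Prod.smul_fst, Prod.smul_snd, smul_lie, map_smul,
      LinearMap.smul_apply, Prod.smul_mk, Prod.mk.injEq]
    constructor <;> module
  · intro x y y'
    simp only [mpBracket, Prod.fst_add, Prod.snd_add, lie_add, map_add,
      LinearMap.add_apply, Prod.mk_add_mk, Prod.mk.injEq]
    constructor <;> abel
  · intro c x y
    simp only [mpBracket, Prod.smul_fst, Prod.smul_snd, lie_smul, map_smul,
      LinearMap.smul_apply, Prod.smul_mk, Prod.mk.injEq]
    constructor <;> module
  · intro x y
    simp only [mpBracket, Prod.neg_mk, Prod.mk.injEq, ← lie_skew x.1 y.1,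
      ← lie_skew x.2 y.2]
    constructor <;> abel
  · rintro ⟨a, p⟩ ⟨b, q⟩ ⟨c, r⟩
    have trL : ∀ (η : H) (ξ a : G), ⁅tr η ξ, a⁆ = -⁅a, tr η ξ⁆ := fun η ξ a =>
      (lie_skew (tr η ξ) a).symm
    have tlL : ∀ (η : H) (ξ : G) (a : H), ⁅tl η ξ, a⁆ = -⁅a, tl η ξ⁆ := fun η ξ a =>
      (lie_skew (tl η ξ) a).symm
    have jacG : ⁅c, ⁅a, b⁆⁆ = -⁅a, ⁅b, c⁆⁆ - ⁅b, ⁅c, a⁆⁆ := by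
      have h := lie_jacobi a b c
      rw [eq_neg_of_add_eq_zero_right h]; abel
    have jacH : ⁅r, ⁅p, q⁆⁆ = -⁅p, ⁅q, r⁆⁆ - ⁅q, ⁅r, p⁆⁆ := by
      have h := lie_jacobi p q r
      rw [eq_neg_of_add_eq_zero_right h]; abel
    simp only [mpBracket, Prod.mk_add_mk, Prod.mk.injEq, Prod.mk_eq_zero,
      lie_add, add_lie, lie_sub, sub_lie, map_add, map_sub, LinearMap.add_apply,
      LinearMap.sub_apply, h1, h2, h3, h4, trL, tlL, jacG, jacH]
    constructor <;> abel
  · intro ξ ξ'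
    simp [mpBracket]
  · intro ξ ξ' h
    simpa using congrArg Prod.fst h
  · intro η η'
    simp [mpBracket]
  · intro η η' h
    simpa using congrArg Prod.snd h
end

section
/- Equip R = ℝ[q₁,…,qₙ,p₁,…,pₙ] with the Lie algebra structure given by the canonical Poisson bracket. Let s ⊆ R be the subspace of polynomials of p-degree at most 1 and let n ⊆ R be the subspace of polynomials all of whose monomials have p-degree at least 2. Then s and n are Lie subalgebras of (R, {·,·}), s ∩ n = 0, and s + n = R; that is, R is the internal direct sum of the two complementary Lie subalgebras s and n. (By the universal property of matched pairs, this exhibits the Lie algebra of symmetric contravariant tensor fields, equivalently of Hamiltonian vector fields in the polynomial model, as the matched pair s ⋈ n.) -/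
/-- The canonical Poisson bracket on `ℝ[q₁,…,qₙ,p₁,…,pₙ]`. -/
noncomputable def pb {n : ℕ} (f g : MvPolynomial (Fin n ⊕ Fin n) ℝ) :
    MvPolynomial (Fin n ⊕ Fin n) ℝ :=
  ∑ i : Fin n,
    (MvPolynomial.pderiv (Sum.inl i) f * MvPolynomial.pderiv (Sum.inr i) g
      - MvPolynomial.pderiv (Sum.inr i) f * MvPolynomial.pderiv (Sum.inl i) g)

/-- The subspace `s` of polynomials of `p`-degree at most 1. -/
def sSet (n : ℕ) : Set (MvPolynomial (Fin n ⊕ Fin n) ℝ) :=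
  {f | ∀ m ∈ f.support, (∑ i : Fin n, m (Sum.inr i)) ≤ 1}

/-- The subspace `n` of polynomials all of whose monomials have `p`-degree ≥ 2. -/
def nSet (n : ℕ) : Set (MvPolynomial (Fin n ⊕ Fin n) ℝ) :=
  {f | ∀ m ∈ f.support, 2 ≤ (∑ i : Fin n, m (Sum.inr i))}

/-- p-degree of an exponent multiset. -/
def pdeg {n : ℕ} (m : (Fin n ⊕ Fin n) →₀ ℕ) : ℕ := ∑ i : Fin n, m (Sum.inr i)

lemma pdeg_add {n : ℕ} (a b : (Fin n ⊕ Fin n) →₀ ℕ) : pdeg (a + b) = pdeg a + pdeg b := by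
  simp [pdeg, Finset.sum_add_distrib]

lemma mem_support_pderiv {n : ℕ} (j : Fin n ⊕ Fin n) (f : MvPolynomial (Fin n ⊕ Fin n) ℝ)
    {m : (Fin n ⊕ Fin n) →₀ ℕ} (hm : m ∈ (MvPolynomial.pderiv j f).support) :
    ∃ s ∈ f.support, s j ≠ 0 ∧ m = s - Finsupp.single j 1 := by
  classical
  have hf : MvPolynomial.pderiv j f
      = ∑ s ∈ f.support, MvPolynomial.pderiv j (MvPolynomial.monomial s (f.coeff s)) := by
    conv_lhs => rw [f.as_sum]
    exact map_sum _ _ _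
  rw [hf] at hm
  obtain ⟨s, hs, hms⟩ := Finset.mem_biUnion.mp (MvPolynomial.support_sum hm)
  rw [MvPolynomial.pderiv_monomial] at hms
  rw [MvPolynomial.support_monomial] at hms
  by_cases h : f.coeff s * s j = 0
  · simp [h] at hms
  · simp only [h, if_false, Finset.mem_singleton] at hms
    exact ⟨s, hs, fun h0 => h (by simp [h0]), hms⟩

lemma pdeg_pderiv_inl {n : ℕ} (i : Fin n) (f : MvPolynomial (Fin n ⊕ Fin n) ℝ)
    {m : (Fin n ⊕ Fin n) →₀ ℕ} (hm : m ∈ (MvPolynomial.pderiv (Sum.inl i) f).support) :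
    ∃ s ∈ f.support, pdeg m = pdeg s := by
  obtain ⟨s, hs, _, rfl⟩ := mem_support_pderiv _ f hm
  refine ⟨s, hs, ?_⟩
  unfold pdeg
  refine Finset.sum_congr rfl fun k _ => ?_
  simp [Finsupp.tsub_apply, Finsupp.single_apply]

lemma pdeg_pderiv_inr {n : ℕ} (i : Fin n) (f : MvPolynomial (Fin n ⊕ Fin n) ℝ)
    {m : (Fin n ⊕ Fin n) →₀ ℕ} (hm : m ∈ (MvPolynomial.pderiv (Sum.inr i) f).support) :
    ∃ s ∈ f.support, pdeg m + 1 = pdeg s := by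
  obtain ⟨s, hs, hsj, rfl⟩ := mem_support_pderiv _ f hm
  refine ⟨s, hs, ?_⟩
  unfold pdeg
  have key : ∀ k : Fin n, (s - (Finsupp.single (Sum.inr i) 1 : (Fin n ⊕ Fin n) →₀ ℕ)) (Sum.inr k)
      + (if k = i then 1 else 0) = s (Sum.inr k) := by
    intro k
    by_cases hk : k = i
    · subst hk
      simp only [Finsupp.tsub_apply, Finsupp.single_apply, if_pos rfl, if_true]
      omega
    · have hne : (Sum.inr i : Fin n ⊕ Fin n) ≠ Sum.inr k := fun h => hk (by cases h; rfl)
      simp [Finsupp.tsub_apply, Finsupp.single_apply, hne, hk]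
  calc (∑ k : Fin n, (s - (Finsupp.single (Sum.inr i) 1 : (Fin n ⊕ Fin n) →₀ ℕ)) (Sum.inr k)) + 1
      = ∑ k : Fin n, ((s - (Finsupp.single (Sum.inr i) 1 : (Fin n ⊕ Fin n) →₀ ℕ)) (Sum.inr k)
          + (if k = i then 1 else 0)) := by
        rw [Finset.sum_add_distrib]
        simp
    _ = ∑ k : Fin n, s (Sum.inr k) := Finset.sum_congr rfl fun k _ => key k

lemma mem_support_pb {n : ℕ} {f g : MvPolynomial (Fin n ⊕ Fin n) ℝ}
    {m : (Fin n ⊕ Fin n) →₀ ℕ} (hm : m ∈ (pb f g).support) :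
    ∃ i : Fin n, ∃ a b,
      m = a + b ∧
      ((a ∈ (MvPolynomial.pderiv (Sum.inl i) f).support ∧
        b ∈ (MvPolynomial.pderiv (Sum.inr i) g).support) ∨
       (a ∈ (MvPolynomial.pderiv (Sum.inr i) f).support ∧
        b ∈ (MvPolynomial.pderiv (Sum.inl i) g).support)) := by
  classical
  unfold pb at hm
  obtain ⟨i, _, hmi⟩ := Finset.mem_biUnion.mp (MvPolynomial.support_sum hm)
  have hsub := MvPolynomial.support_sub _ _ _ hmi
  rcases Finset.mem_union.mp hsub with h | h
  · obtain ⟨a, ha, b, hb, hab⟩ := Finset.mem_add.mp (MvPolynomial.support_mul _ _ h)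
    exact ⟨i, a, b, hab.symm, Or.inl ⟨ha, hb⟩⟩
  · obtain ⟨a, ha, b, hb, hab⟩ := Finset.mem_add.mp (MvPolynomial.support_mul _ _ h)
    exact ⟨i, a, b, hab.symm, Or.inr ⟨ha, hb⟩⟩

/-- `s` and `n` are Lie subalgebras of `(R, {·,·})` (ℝ-subspaces
closed under the canonical Poisson bracket), `s ∩ n = 0`, and `s + n = R`: `R` is
the internal direct sum of the two complementary Lie subalgebras `s` and `n`. -/
theorem poisson_internal_direct_sum {n : ℕ} (hn : 0 < n) :
    -- s is a Lie subalgebra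
    ((0 : MvPolynomial (Fin n ⊕ Fin n) ℝ) ∈ sSet n) ∧
    (∀ f g, f ∈ sSet n → g ∈ sSet n → f + g ∈ sSet n) ∧
    (∀ (c : ℝ) f, f ∈ sSet n → c • f ∈ sSet n) ∧
    (∀ f g, f ∈ sSet n → g ∈ sSet n → pb f g ∈ sSet n) ∧
    -- n is a Lie subalgebra
    ((0 : MvPolynomial (Fin n ⊕ Fin n) ℝ) ∈ nSet n) ∧
    (∀ f g, f ∈ nSet n → g ∈ nSet n → f + g ∈ nSet n) ∧
    (∀ (c : ℝ) f, f ∈ nSet n → c • f ∈ nSet n) ∧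
    (∀ f g, f ∈ nSet n → g ∈ nSet n → pb f g ∈ nSet n) ∧
    -- s ∩ n = 0
    (∀ f, f ∈ sSet n → f ∈ nSet n → f = 0) ∧
    -- s + n = R
    (∀ f : MvPolynomial (Fin n ⊕ Fin n) ℝ,
      ∃ fs ∈ sSet n, ∃ fn ∈ nSet n, f = fs + fn) := by
  classical
  refine ⟨?_, ?_, ?_, ?_, ?_, ?_, ?_, ?_, ?_, ?_⟩
  · intro m hm; simp at hm
  · intro f g hf hg m hm
    rcases Finset.mem_union.mp (MvPolynomial.support_add hm) with h | h
    exacts [hf m h, hg m h]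
  · intro c f hf m hm
    exact hf m (MvPolynomial.support_smul hm)
  · intro f g hf hg m hm
    obtain ⟨i, a, b, rfl, hcase⟩ := mem_support_pb hm
    show pdeg (a + b) ≤ 1
    rw [pdeg_add]
    rcases hcase with ⟨ha, hb⟩ | ⟨ha, hb⟩
    · obtain ⟨s, hs, hsa⟩ := pdeg_pderiv_inl i f ha
      obtain ⟨t, ht, htb⟩ := pdeg_pderiv_inr i g hb
      have h1 : pdeg s ≤ 1 := hf s hs
      have h2 : pdeg t ≤ 1 := hg t ht
      omega
    · obtain ⟨s, hs, hsa⟩ := pdeg_pderiv_inr i f ha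
      obtain ⟨t, ht, htb⟩ := pdeg_pderiv_inl i g hb
      have h1 : pdeg s ≤ 1 := hf s hs
      have h2 : pdeg t ≤ 1 := hg t ht
      omega
  · intro m hm; simp at hm
  · intro f g hf hg m hm
    rcases Finset.mem_union.mp (MvPolynomial.support_add hm) with h | h
    exacts [hf m h, hg m h]
  · intro c f hf m hm
    exact hf m (MvPolynomial.support_smul hm)
  · intro f g hf hg m hm
    obtain ⟨i, a, b, rfl, hcase⟩ := mem_support_pb hm
    show 2 ≤ pdeg (a + b)
    rw [pdeg_add]
    rcases hcase with ⟨ha, hb⟩ | ⟨ha, hb⟩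
    · obtain ⟨s, hs, hsa⟩ := pdeg_pderiv_inl i f ha
      obtain ⟨t, ht, htb⟩ := pdeg_pderiv_inr i g hb
      have h1 : 2 ≤ pdeg s := hf s hs
      have h2 : 2 ≤ pdeg t := hg t ht
      omega
    · obtain ⟨s, hs, hsa⟩ := pdeg_pderiv_inr i f ha
      obtain ⟨t, ht, htb⟩ := pdeg_pderiv_inl i g hb
      have h1 : 2 ≤ pdeg s := hf s hs
      have h2 : 2 ≤ pdeg t := hg t ht
      omega
  · intro f hf hg
    rw [← MvPolynomial.support_eq_empty, Finset.eq_empty_iff_forall_notMem]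
    intro m hm
    have h1 := hf m hm
    have h2 := hg m hm
    omega
  · intro f
    refine ⟨∑ m ∈ f.support.filter (fun m => pdeg m ≤ 1),
        MvPolynomial.monomial m (f.coeff m), ?_,
      ∑ m ∈ f.support.filter (fun m => ¬ pdeg m ≤ 1),
        MvPolynomial.monomial m (f.coeff m), ?_, ?_⟩
    · intro m hm
      obtain ⟨s, hs, hms⟩ := Finset.mem_biUnion.mp (MvPolynomial.support_sum hm)
      rw [MvPolynomial.support_monomial] at hms
      split_ifs at hms with h
      · simp at hms
      · rw [Finset.mem_singleton] at hms
        subst hms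
        exact (Finset.mem_filter.mp hs).2
    · intro m hm
      obtain ⟨s, hs, hms⟩ := Finset.mem_biUnion.mp (MvPolynomial.support_sum hm)
      rw [MvPolynomial.support_monomial] at hms
      split_ifs at hms with h
      · simp at hms
      · rw [Finset.mem_singleton] at hms
        subst hms
        have hle := (Finset.mem_filter.mp hs).2
        show 2 ≤ pdeg m
        omega
    · rw [Finset.sum_filter_add_sum_filter_not]
      exact f.as_sum
end
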